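/- Let Y be a metric space, K a compact metric space, Z a metric space, T > 0, and φ : [0, T] × K × Z → Y continuous. Define R(t, z) = {φ(s, u, z) : s ∈ [0, t], u ∈ K}. Then (t, z) ↦ R(t, z) is jointly continuous from [0, T] × Z to the nonempty compact subsets of Y with the Hausdorff metric. -/
import Mathlib


theorem reachable_set_jointly_continuous
    {Y K Z : Type*} [MetricSpace Y] [MetricSpace K] [CompactSpace K] [Nonempty K]
    [MetricSpace Z]
    (T : ℝ) (hT : 0 < T) (φ : Set.Icc (0:ℝ) T × K × Z → Y) (hφ : Continuous φ)
    (R : ℝ → Z → Set Y)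
    (hR : ∀ t z, R t z =
      {y | ∃ (s : Set.Icc (0:ℝ) T), (s:ℝ) ≤ t ∧ ∃ u : K, φ (s, u, z) = y}) :
    ∀ t ∈ Set.Icc (0:ℝ) T, ∀ z : Z, ∀ ε > (0:ℝ), ∃ δ > (0:ℝ),
      ∀ t' ∈ Set.Icc (0:ℝ) T, ∀ z' : Z, |t' - t| < δ → dist z' z < δ →
        Metric.hausdorffDist (R t' z') (R t z) < ε := by
  intro t ht z ε hε
  -- ψ : the map at the fixed z, uniformly continuous on the compact domain
  set ψ : Set.Icc (0:ℝ) T × K → Y := fun p => φ (p.1, p.2, z) with hψdef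
  have hψc : Continuous ψ :=
    hφ.comp (continuous_fst.prodMk (continuous_snd.prodMk continuous_const))
  have hψu : UniformContinuous ψ := CompactSpace.uniformContinuous_of_continuous hψc
  obtain ⟨δ₁, hδ₁, hδ₁'⟩ := Metric.uniformContinuous_iff.mp hψu (ε/4) (by linarith)
  -- curried map into the sup-metric function space
  let φc : C(Z × (Set.Icc (0:ℝ) T × K), Y) :=
    ⟨fun p => φ (p.2.1, p.2.2, p.1),
      hφ.comp ((continuous_fst.comp continuous_snd).prodMk
        (((continuous_snd.comp continuous_snd)).prodMk continuous_fst))⟩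
  have hcurry : Continuous φc.curry := φc.curry.continuous
  obtain ⟨δ₂, hδ₂, hδ₂'⟩ := Metric.continuousAt_iff.mp (hcurry.continuousAt (x := z))
      (ε/4) (by linarith)
  refine ⟨min δ₁ δ₂, lt_min hδ₁ hδ₂, ?_⟩
  intro t' ht' z' hdt hdz
  have hdt1 : |t' - t| < δ₁ := lt_of_lt_of_le hdt (min_le_left _ _)
  have hdz2 : dist z' z < δ₂ := lt_of_lt_of_le hdz (min_le_right _ _)
  have hzfun : ∀ p : Set.Icc (0:ℝ) T × K,
      dist (φ (p.1, p.2, z')) (φ (p.1, p.2, z)) < ε/4 := by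
    intro p
    have h1 : dist (φc.curry z' p) (φc.curry z p) ≤ dist (φc.curry z') (φc.curry z) :=
      ContinuousMap.dist_apply_le_dist p
    have h2 := hδ₂' hdz2
    calc dist (φ (p.1, p.2, z')) (φ (p.1, p.2, z))
        = dist (φc.curry z' p) (φc.curry z p) := rfl
      _ ≤ dist (φc.curry z') (φc.curry z) := h1
      _ < ε/4 := h2
  have htfun : ∀ (s s' : Set.Icc (0:ℝ) T) (u : K), |(s:ℝ) - (s':ℝ)| < δ₁ →
      dist (φ (s, u, z)) (φ (s', u, z)) < ε/4 := by
    intro s s' u hss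
    have : dist ((s, u) : Set.Icc (0:ℝ) T × K) (s', u) < δ₁ := by
      rw [Prod.dist_eq]
      simp only [dist_self]
      rw [max_eq_left dist_nonneg]
      rwa [Subtype.dist_eq, Real.dist_eq]
    exact hδ₁' this
  rw [hR, hR]
  have key : Metric.hausdorffDist
      {y | ∃ (s : Set.Icc (0:ℝ) T), (s:ℝ) ≤ t' ∧ ∃ u : K, φ (s, u, z') = y}
      {y | ∃ (s : Set.Icc (0:ℝ) T), (s:ℝ) ≤ t ∧ ∃ u : K, φ (s, u, z) = y} ≤ ε/2 := by
    apply Metric.hausdorffDist_le_of_mem_dist (by linarith)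
    · rintro x ⟨s, hs, u, rfl⟩
      by_cases hst : (s:ℝ) ≤ t
      · refine ⟨φ (s, u, z), ⟨s, hst, u, rfl⟩, ?_⟩
        have := hzfun (s, u)
        simp only at this ⊢
        linarith
      · push_neg at hst
        refine ⟨φ (⟨t, ht⟩, u, z), ⟨⟨t, ht⟩, le_refl t, u, rfl⟩, ?_⟩
        have hst' : |(s:ℝ) - t| < δ₁ := by
          rw [abs_sub_lt_iff]
          constructor
          · have : (s:ℝ) ≤ t' := hs
            have := abs_sub_lt_iff.mp hdt1
            linarith [this.1, this.2]
          · linarith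
        calc dist (φ (s, u, z')) (φ (⟨t, ht⟩, u, z))
            ≤ dist (φ (s, u, z')) (φ (s, u, z))
              + dist (φ (s, u, z)) (φ (⟨t, ht⟩, u, z)) := dist_triangle _ _ _
          _ ≤ ε/4 + ε/4 := add_le_add (le_of_lt (hzfun (s, u)))
              (le_of_lt (htfun s ⟨t, ht⟩ u hst'))
          _ = ε/2 := by ring
    · rintro x ⟨s, hs, u, rfl⟩
      by_cases hst : (s:ℝ) ≤ t'
      · refine ⟨φ (s, u, z'), ⟨s, hst, u, rfl⟩, ?_⟩
        rw [dist_comm]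
        have := hzfun (s, u)
        simp only at this ⊢
        linarith
      · push_neg at hst
        refine ⟨φ (⟨t', ht'⟩, u, z'), ⟨⟨t', ht'⟩, le_refl t', u, rfl⟩, ?_⟩
        rw [dist_comm]
        have hst' : |(t':ℝ) - (s:ℝ)| < δ₁ := by
          rw [abs_sub_lt_iff]
          constructor
          · linarith
          · have := abs_sub_lt_iff.mp hdt1
            linarith [this.1, this.2]
        calc dist (φ (⟨t', ht'⟩, u, z')) (φ (s, u, z))
            ≤ dist (φ (⟨t', ht'⟩, u, z')) (φ (⟨t', ht'⟩, u, z))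
              + dist (φ (⟨t', ht'⟩, u, z)) (φ (s, u, z)) := dist_triangle _ _ _
          _ ≤ ε/4 + ε/4 := add_le_add (le_of_lt (hzfun (⟨t', ht'⟩, u)))
              (le_of_lt (htfun ⟨t', ht'⟩ s u hst'))
          _ = ε/2 := by ring
  exact lt_of_le_of_lt key (by linarith)
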